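/- Let V and W be finite-dimensional vector spaces over ℂ, and let f : V → W and g : W → V be linear maps. Define h_V := id_V + g ∘ f and h_W := id_W + f ∘ g. Then for every λ ∈ ℂ with λ ≠ 1, the map f restricts to a linear isomorphism from the generalized λ-eigenspace of h_V onto the generalized λ-eigenspace of h_W. -/
import Mathlib

open Module

private lemma aux_intertwine {K V W : Type*} [Field K] [AddCommGroup V] [AddCommGroup W]
    [Module K V] [Module K W] (f : V →ₗ[K] W) (A : Module.End K V) (B : Module.End K W)
    (h : ∀ x, f (A x) = B (f x)) (l : K) :
    ∀ (k : ℕ) (x : V), ((B - l • 1) ^ k) (f x) = f (((A - l • 1) ^ k) x) := by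
  have h1 : ∀ y, ((B - l • 1)) (f y) = f (((A - l • 1)) y) := by
    intro y
    simp only [LinearMap.sub_apply, LinearMap.smul_apply, Module.End.one_apply, map_sub, map_smul,
      h y]
  intro k
  induction k with
  | zero => intro x; simp
  | succ n ih =>
    intro x
    rw [pow_succ', pow_succ']
    simp only [Module.End.mul_apply]
    rw [ih, h1]

private lemma aux_inj {K V : Type*} [Field K] [AddCommGroup V] [Module K V]
    (A : Module.End K V) (l : K) (hl : l ≠ 1) (x : V)
    (hx : x ∈ Module.End.maxGenEigenspace A l) (hAx : A x = x) : x = 0 := by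
  rw [Module.End.mem_maxGenEigenspace] at hx
  obtain ⟨k, hk⟩ := hx
  have key : ∀ n : ℕ, ((A - l • 1) ^ n) x = (1 - l) ^ n • x := by
    intro n
    induction n with
    | zero => simp
    | succ m ih =>
      rw [pow_succ', Module.End.mul_apply, ih, map_smul]
      simp only [LinearMap.sub_apply, LinearMap.smul_apply, Module.End.one_apply, hAx]
      rw [pow_succ, mul_smul]
      congr 1
      rw [sub_smul, one_smul]
  rw [key] at hk
  have : (1 - l) ^ k ≠ 0 := pow_ne_zero _ (sub_ne_zero.mpr (fun h => hl h.symm))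
  exact (smul_eq_zero.mp hk).resolve_left this

/-- The canonical morphism between nearby and vanishing cycles induces isomorphisms
of generalized λ-eigenspaces of the monodromies for λ ≠ 1: abstractly, for linear
maps `f : V → W`, `g : W → V` and `h_V = id + g∘f`, `h_W = id + f∘g`, the map `f`
restricts to a linear isomorphism on generalized λ-eigenspaces for every `λ ≠ 1`. -/
theorem stmt_1 (V W : Type*) [AddCommGroup V] [AddCommGroup W]
    [Module ℂ V] [Module ℂ W] [FiniteDimensional ℂ V] [FiniteDimensional ℂ W]
    (f : V →ₗ[ℂ] W) (g : W →ₗ[ℂ] V) :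
    ∀ l : ℂ, l ≠ 1 →
      ∃ e : (Module.End.maxGenEigenspace (LinearMap.id + g ∘ₗ f : Module.End ℂ V) l) ≃ₗ[ℂ]
            (Module.End.maxGenEigenspace (LinearMap.id + f ∘ₗ g : Module.End ℂ W) l),
        ∀ x, (e x : W) = f (x : V) := by
  intro l hl
  set A : Module.End ℂ V := LinearMap.id + g ∘ₗ f with hA
  set B : Module.End ℂ W := LinearMap.id + f ∘ₗ g with hB
  have hfAB : ∀ x, f (A x) = B (f x) := by
    intro x; simp [hA, hB, map_add]
  have hgBA : ∀ x, g (B x) = A (g x) := by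
    intro x; simp [hA, hB, map_add]
  have hfm : ∀ x ∈ Module.End.maxGenEigenspace A l,
      f x ∈ Module.End.maxGenEigenspace B l := by
    intro x hx
    rw [Module.End.mem_maxGenEigenspace] at hx ⊢
    obtain ⟨k, hk⟩ := hx
    exact ⟨k, by rw [aux_intertwine f A B hfAB l k x, hk, map_zero]⟩
  have hgm : ∀ x ∈ Module.End.maxGenEigenspace B l,
      g x ∈ Module.End.maxGenEigenspace A l := by
    intro x hx
    rw [Module.End.mem_maxGenEigenspace] at hx ⊢
    obtain ⟨k, hk⟩ := hx
    exact ⟨k, by rw [aux_intertwine g B A hgBA l k x, hk, map_zero]⟩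
  set f' := f.restrict hfm with hf'
  have hinj : Function.Injective f' := by
    rw [← LinearMap.ker_eq_bot, LinearMap.ker_eq_bot']
    rintro ⟨x, hx⟩ hfx
    have hfx0 : f x = 0 := congrArg Subtype.val hfx
    have hAx : A x = x := by
      have : g (f x) = 0 := by rw [hfx0, map_zero]
      simp [hA, this]
    exact Subtype.ext (aux_inj A l hl x hx hAx)
  have hsurj : Function.Surjective f' := by
    -- the restriction of B - 1 to the eigenspace is injective, hence surjective
    have hBm : ∀ x ∈ Module.End.maxGenEigenspace B l,
        (B - 1) x ∈ Module.End.maxGenEigenspace B l := by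
      intro x hx
      exact Submodule.sub_mem _
        (by
          rw [Module.End.mem_maxGenEigenspace] at hx ⊢
          obtain ⟨k, hk⟩ := hx
          refine ⟨k, ?_⟩
          have := aux_intertwine (B : W →ₗ[ℂ] W) B B (fun x => rfl) l k x
          rw [this, hk, map_zero]) hx
    set T := (B - 1).restrict hBm with hT
    have hTinj : Function.Injective T := by
      rw [← LinearMap.ker_eq_bot, LinearMap.ker_eq_bot']
      rintro ⟨y, hy⟩ hTy
      have h0 : B y - y = 0 := congrArg Subtype.val hTy
      exact Subtype.ext (aux_inj B l hl y hy (sub_eq_zero.mp h0))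
    have hTsurj : Function.Surjective T := LinearMap.injective_iff_surjective.mp hTinj
    rintro ⟨y, hy⟩
    obtain ⟨⟨z, hz⟩, hTz⟩ := hTsurj ⟨y, hy⟩
    refine ⟨⟨g z, hgm z hz⟩, ?_⟩
    apply Subtype.ext
    have h1 : B z - z = y := congrArg Subtype.val hTz
    have : f (g z) = B z - z := by simp [hB]
    simpa [hf', LinearMap.restrict_apply] using this.trans h1
  exact ⟨LinearEquiv.ofBijective f' ⟨hinj, hsurj⟩, fun x => rfl⟩
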